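/- arXiv:2211.10662 — 4 statements merged into one kernel-verified Lean document; each statement's English description precedes it below -/
import Mathlib

section
/- Let $M$ be a quasi-pseudodistance on a set $S$: there exists $C > 1$ such that $M(x,y) \le C(M(x,z) + M(z,y))$ for all $x,y,z \in S$, and $M \ge 0$. Then for $\epsilon_0 = \log 2 / (2 \log(2C))$ and any $0 < \epsilon \le \epsilon_0$, for every finite chain of points $x = x_0, x_1, \dots, x_k, x_{k+1} = y$ in $S$ one has $M(x,y)^\epsilon \le 2 \sum_{i=0}^{k} M(x_i, x_{i+1})^\epsilon$. -/
/-!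
With `d := M ^ ε`, two applications of the quasi-triangle inequality bound `M a e` by `(2C)²` times
the largest of `M a b`, `M b c`, `M c e`, and the choice of `ε` means exactly `((2C)²) ^ ε ≤ 2`; so
`d` between the end points of a chain of at most three links is at most twice its longest link.
For a longer chain of total `d`-length `T`, cut out the last link `[x j, x (j + 1)]` before which
at most `T / 2` has accumulated. Both remaining pieces have length at most `T / 2`, so by induction
their end points are within `d`-distance `T`, as are those of the middle link, and the three-link
bound gives `2 T`.
-/

open Finset Fin.NatCast

lemma exists_sum_Ico_le_half_of_nonneg {a : ℕ → ℝ} (ha : ∀ i, 0 ≤ a i) {m n : ℕ} (hmn : m < n) :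
    ∃ j, m ≤ j ∧ j < n ∧ ∑ i ∈ Ico m j, a i ≤ (∑ i ∈ Ico m n, a i) / 2 ∧
      ∑ i ∈ Ico (j + 1) n, a i ≤ (∑ i ∈ Ico m n, a i) / 2 := by
  set T := ∑ i ∈ Ico m n, a i
  let P : ℕ → Prop := fun j ↦ ∑ i ∈ Ico m j, a i ≤ T / 2
  have hT : 0 ≤ T := sum_nonneg fun i _ ↦ ha i
  have hPm : P m := by simp only [P, Ico_self, sum_empty]; linarith
  set j := Nat.findGreatest P (n - 1)
  have hmj : m ≤ j := Nat.le_findGreatest (by omega) hPm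
  have hjn : j < n := by have := Nat.findGreatest_le (P := P) (n - 1); omega
  refine ⟨j, hmj, hjn, Nat.findGreatest_spec (by omega) hPm, ?_⟩
  rcases (show j + 1 ≤ n by omega).eq_or_lt with hj | hj
  · rw [hj, Ico_self, sum_empty]; linarith
  · have hnot : T / 2 < ∑ i ∈ Ico m (j + 1), a i :=
      not_le.1 (Nat.findGreatest_is_greatest (Nat.lt_succ_self j) (by omega))
    linarith [sum_Ico_consecutive a (show m ≤ j + 1 by omega) hj.le]

section ChainBound

variable {S : Type*} {d : S → S → ℝ}

theorem le_two_mul_sum_Ico_of_le_two_mul_max (hnn : ∀ a b, 0 ≤ d a b)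
    (h₂ : ∀ a b c, d a c ≤ 2 * max (d a b) (d b c))
    (h₃ : ∀ a b c e, d a e ≤ 2 * max (d a b) (max (d b c) (d c e)))
    (x : ℕ → S) {m n : ℕ} (hmn : m < n) :
    d (x m) (x n) ≤ 2 * ∑ i ∈ Ico m n, d (x i) (x (i + 1)) := by
  induction hL : n - m using Nat.strong_induction_on generalizing m n with
  | _ L IH =>
  set T := ∑ i ∈ Ico m n, d (x i) (x (i + 1))
  have hT : 0 ≤ T := sum_nonneg fun i _ ↦ hnn _ _
  obtain ⟨j, hmj, hjn, hleft, hright⟩ :=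
    exists_sum_Ico_le_half_of_nonneg (fun i ↦ hnn (x i) (x (i + 1))) hmn
  have hmid : d (x j) (x (j + 1)) ≤ T :=
    single_le_sum (fun i _ ↦ hnn (x i) (x (i + 1))) (mem_Ico.2 ⟨hmj, hjn⟩)
  have hleft' : m < j → d (x m) (x j) ≤ T := fun h ↦ by
    linarith [IH (j - m) (by omega) h rfl]
  have hright' : j + 1 < n → d (x (j + 1)) (x n) ≤ T := fun h ↦ by
    linarith [IH (n - (j + 1)) (by omega) h rfl]
  rcases hmj.eq_or_lt with rfl | hmj <;>
    rcases (Nat.lt_iff_add_one_le.1 hjn).eq_or_lt with rfl | hjn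
  · linarith
  · calc d (x m) (x n) ≤ 2 * max _ _ := h₂ _ (x (m + 1)) _
      _ ≤ 2 * T := by gcongr; exact max_le hmid (hright' hjn)
  · calc d (x m) (x (j + 1)) ≤ 2 * max _ _ := h₂ _ (x j) _
      _ ≤ 2 * T := by gcongr; exact max_le (hleft' hmj) hmid
  · calc d (x m) (x n) ≤ 2 * max _ (max _ _) := h₃ _ (x j) (x (j + 1)) _
      _ ≤ 2 * T := by gcongr; exact max_le (hleft' hmj) (max_le hmid (hright' hjn))

end ChainBound

lemma rpow_le_two_mul_rpow_of_le_mul {u K m ε : ℝ} (hu : 0 ≤ u) (hK : 0 ≤ K) (hm : 0 ≤ m)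
    (hε : 0 ≤ ε) (hKε : K ^ ε ≤ 2) (h : u ≤ K * m) : u ^ ε ≤ 2 * m ^ ε :=
  calc u ^ ε ≤ (K * m) ^ ε := Real.rpow_le_rpow hu h hε
    _ = K ^ ε * m ^ ε := Real.mul_rpow hK hm
    _ ≤ 2 * m ^ ε := by gcongr

lemma rpow_le_two_of_le_log_two_div {b ε : ℝ} (hb : 1 < b)
    (hε : ε ≤ Real.log 2 / (2 * Real.log b)) : (b ^ 2) ^ ε ≤ 2 := by
  rw [Real.rpow_le_iff_le_log (by positivity) two_pos, Real.log_pow, Nat.cast_two]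
  rwa [le_div_iff₀ (by linarith [Real.log_pos hb])] at hε

section QuasiTriangle

variable {S : Type*} {M : S → S → ℝ} {C ε : ℝ}

lemma le_two_mul_mul_max (hC : 0 ≤ C) (htri : ∀ x y z, M x y ≤ C * (M x z + M z y))
    (a b c : S) : M a c ≤ 2 * C * max (M a b) (M b c) :=
  calc M a c ≤ C * (M a b + M b c) := htri a c b
    _ ≤ C * (2 * max (M a b) (M b c)) := by
      gcongr; linarith [le_max_left (M a b) (M b c), le_max_right (M a b) (M b c)]
    _ = 2 * C * max (M a b) (M b c) := by ring

lemma le_two_mul_sq_mul_max (hC : 1 ≤ 2 * C) (hnn : ∀ x y, 0 ≤ M x y)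
    (htri : ∀ x y z, M x y ≤ C * (M x z + M z y)) (a b c e : S) :
    M a e ≤ (2 * C) ^ 2 * max (M a b) (max (M b c) (M c e)) := by
  have hC0 : 0 ≤ C := by linarith
  set m := max (M a b) (max (M b c) (M c e))
  have hbe : M b e ≤ 2 * C * m :=
    (le_two_mul_mul_max hC0 htri b c e).trans (by gcongr; exact le_max_right _ _)
  have hab : M a b ≤ 2 * C * m := le_mul_of_one_le_left (hnn a b) hC |>.trans
    (by gcongr; exact le_max_left _ _)
  calc M a e ≤ 2 * C * max (M a b) (M b e) := le_two_mul_mul_max hC0 htri a b e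
    _ ≤ 2 * C * (2 * C * m) := by gcongr; exact max_le hab hbe
    _ = (2 * C) ^ 2 * m := by ring

lemma rpow_le_two_mul_max_rpow (hC : 1 ≤ 2 * C) (hnn : ∀ x y, 0 ≤ M x y)
    (htri : ∀ x y z, M x y ≤ C * (M x z + M z y)) (hε : 0 ≤ ε) (hCε : ((2 * C) ^ 2) ^ ε ≤ 2)
    (a b c : S) : M a c ^ ε ≤ 2 * max (M a b ^ ε) (M b c ^ ε) := by
  have hlin : (2 * C) ^ ε ≤ 2 :=
    (Real.rpow_le_rpow (by linarith) (by nlinarith) hε).trans hCε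
  rw [← Real.rpow_max (hnn a b) (hnn b c) hε]
  exact rpow_le_two_mul_rpow_of_le_mul (hnn a c) (by linarith) (le_max_of_le_left (hnn a b))
    hε hlin (le_two_mul_mul_max (by linarith) htri a b c)

lemma rpow_le_two_mul_max_rpow₃ (hC : 1 ≤ 2 * C) (hnn : ∀ x y, 0 ≤ M x y)
    (htri : ∀ x y z, M x y ≤ C * (M x z + M z y)) (hε : 0 ≤ ε) (hCε : ((2 * C) ^ 2) ^ ε ≤ 2)
    (a b c e : S) : M a e ^ ε ≤ 2 * max (M a b ^ ε) (max (M b c ^ ε) (M c e ^ ε)) := by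
  rw [← Real.rpow_max (hnn b c) (hnn c e) hε,
    ← Real.rpow_max (hnn a b) (le_max_of_le_left (hnn b c)) hε]
  exact rpow_le_two_mul_rpow_of_le_mul (hnn a e) (by positivity)
    (le_max_of_le_left (hnn a b)) hε hCε (le_two_mul_sq_mul_max hC hnn htri a b c e)

end QuasiTriangle

/-- chain inequality for powers of a quasi-pseudodistance. -/
theorem stmt_0 {S : Type*} (M : S → S → ℝ) (C : ℝ) (hC : 1 < C)
    (hnn : ∀ x y, 0 ≤ M x y)
    (htri : ∀ x y z, M x y ≤ C * (M x z + M z y))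
    (ε : ℝ) (hε0 : 0 < ε) (hε : ε ≤ Real.log 2 / (2 * Real.log (2 * C)))
    (k : ℕ) (x : Fin (k + 2) → S) :
    M (x 0) (x (Fin.last (k + 1))) ^ ε ≤
      2 * ∑ i : Fin (k + 1), M (x i.castSucc) (x i.succ) ^ ε := by
  have h2C : 1 ≤ 2 * C := by linarith
  have hCε := rpow_le_two_of_le_log_two_div (by linarith) hε
  -- `(n : Fin (k + 2))` is `n % (k + 2)`, which agrees with `n` on the indices `0, …, k + 1` used.
  have hchain := le_two_mul_sum_Ico_of_le_two_mul_max (fun a b ↦ Real.rpow_nonneg (hnn a b) ε)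
    (rpow_le_two_mul_max_rpow h2C hnn htri hε0.le hCε)
    (rpow_le_two_mul_max_rpow₃ h2C hnn htri hε0.le hCε)
    (fun n : ℕ ↦ x n) (Nat.succ_pos k)
  rw [← range_eq_Ico, ← Fin.sum_univ_eq_sum_range] at hchain
  convert hchain using 4
  · exact Fin.natCast_zero.symm
  · exact (Fin.natCast_eq_last _).symm
  · congr 2 <;> ext <;> simp only [Fin.val_castSucc, Fin.val_succ, Fin.val_natCast] <;>
      exact (Nat.mod_eq_of_lt (by omega)).symm
end

section
/- Let $C > 1$ and suppose nonnegative real numbers $r_{ij}$ for $i,j \in \{1,2,3,4\}$ satisfy $r_{ij} \le C r_{ji}$ and $r_{ij} \le C(r_{ik} + r_{kj})$ for all $i,j,k$. Then $r_{12} r_{34} \le 4 C^4 \max(r_{13} r_{24},\ r_{14} r_{23})$. -/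
/-!
Reversing one side of a quasi-triangle inequality costs a factor `C`, so every side is at most
`2 C²` times one of the two sides it closes a triangle with. Applied to `r₁₂` and `r₃₄` through
each of the two remaining points, this bounds each of them by `2 C²` times a side of either
diagonal pair, and a short case analysis shows that these bounds always combine into one of the
two diagonal products.
-/

structure IsQuasiMetric {ι : Type*} (C : ℝ) (r : ι → ι → ℝ) : Prop where
  nonneg : ∀ i j, 0 ≤ r i j
  le_mul_swap : ∀ i j, r i j ≤ C * r j i
  le_mul_add : ∀ i j k, r i j ≤ C * (r i k + r k j)

namespace IsQuasiMetric

variable {ι : Type*} {C : ℝ} {r : ι → ι → ℝ}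

lemma le_sq_mul_add_left (hr : IsQuasiMetric C r) (hC : 1 ≤ C) (i j k : ι) :
    r i j ≤ C ^ 2 * (r i k + r j k) := by
  have hik : C * r i k ≤ C ^ 2 * r i k :=
    mul_le_mul_of_nonneg_right (by nlinarith) (hr.nonneg i k)
  nlinarith [hr.le_mul_add i j k, hr.le_mul_swap k j]

lemma le_sq_mul_add_right (hr : IsQuasiMetric C r) (hC : 1 ≤ C) (i j k : ι) :
    r i j ≤ C ^ 2 * (r k i + r k j) := by
  have hkj : C * r k j ≤ C ^ 2 * r k j :=
    mul_le_mul_of_nonneg_right (by nlinarith) (hr.nonneg k j)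
  nlinarith [hr.le_mul_add i j k, hr.le_mul_swap i k]

lemma le_two_mul_sq_mul_max_left (hr : IsQuasiMetric C r) (hC : 1 ≤ C) (i j k : ι) :
    r i j ≤ 2 * C ^ 2 * max (r i k) (r j k) := by
  nlinarith [hr.le_sq_mul_add_left hC i j k, le_max_left (r i k) (r j k),
    le_max_right (r i k) (r j k)]

lemma le_two_mul_sq_mul_max_right (hr : IsQuasiMetric C r) (hC : 1 ≤ C) (i j k : ι) :
    r i j ≤ 2 * C ^ 2 * max (r k i) (r k j) := by
  nlinarith [hr.le_sq_mul_add_right hC i j k, le_max_left (r k i) (r k j),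
    le_max_right (r k i) (r k j)]

end IsQuasiMetric

lemma mul_le_max_mul_of_le_max {a b p q s t : ℝ} (ha : 0 ≤ a) (hb : 0 ≤ b)
    (hap : a ≤ max p s) (haq : a ≤ max t q) (hbp : b ≤ max p t) (hbq : b ≤ max s q) :
    a * b ≤ max (p * q) (t * s) := by
  have pq : a ≤ p → b ≤ q → a * b ≤ max (p * q) (t * s) := fun h h' =>
    le_max_of_le_left (mul_le_mul h h' hb (ha.trans h))
  have qp : a ≤ q → b ≤ p → a * b ≤ max (p * q) (t * s) := fun h h' =>
    le_max_of_le_left ((mul_le_mul h h' hb (ha.trans h)).trans_eq (mul_comm q p))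
  have ts : a ≤ t → b ≤ s → a * b ≤ max (p * q) (t * s) := fun h h' =>
    le_max_of_le_right (mul_le_mul h h' hb (ha.trans h))
  have st : a ≤ s → b ≤ t → a * b ≤ max (p * q) (t * s) := fun h h' =>
    le_max_of_le_right ((mul_le_mul h h' hb (ha.trans h)).trans_eq (mul_comm s t))
  rcases le_max_iff.1 hap with ha₁ | ha₁ <;> rcases le_max_iff.1 haq with ha₂ | ha₂ <;>
    rcases le_max_iff.1 hbp with hb₁ | hb₁ <;> rcases le_max_iff.1 hbq with hb₂ | hb₂ <;>
    first
    | exact pq ‹_› ‹_› | exact qp ‹_› ‹_› | exact ts ‹_› ‹_› | exact st ‹_› ‹_›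
    | skip
  -- In the two remaining cases `a` and `b` are bounded only by sides of different diagonals.
  · rcases le_total p t with h | h
    · exact ts (ha₁.trans h) hb₂
    · exact qp ha₂ (hb₁.trans h)
  · rcases le_total p s with h | h
    · exact ts ha₂ (hb₁.trans h)
    · exact pq (ha₁.trans h) hb₂

/-- algebraic four-point lemma for quasi-metric data.
Indices `0,1,2,3` play the roles of `1,2,3,4`. -/
theorem stmt_5 (C : ℝ) (hC : 1 < C) (r : Fin 4 → Fin 4 → ℝ)
    (hnn : ∀ i j, 0 ≤ r i j)
    (hsym : ∀ i j, r i j ≤ C * r j i)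
    (htri : ∀ i j k, r i j ≤ C * (r i k + r k j)) :
    r 0 1 * r 2 3 ≤ 4 * C ^ 4 * max (r 0 2 * r 1 3) (r 0 3 * r 1 2) := by
  have hr : IsQuasiMetric C r := ⟨hnn, hsym, htri⟩
  have scaled (i j k l : Fin 4) :
      2 * C ^ 2 * max (r i j) (r k l) = max (2 * C ^ 2 * r i j) (2 * C ^ 2 * r k l) :=
    mul_max_of_nonneg _ _ (by positivity)
  calc r 0 1 * r 2 3
      ≤ max (2 * C ^ 2 * r 0 2 * (2 * C ^ 2 * r 1 3))
          (2 * C ^ 2 * r 0 3 * (2 * C ^ 2 * r 1 2)) := by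
        refine mul_le_max_mul_of_le_max (hnn 0 1) (hnn 2 3) ?_ ?_ ?_ ?_ <;>
          rw [← scaled]
        · exact hr.le_two_mul_sq_mul_max_left hC.le 0 1 2
        · exact hr.le_two_mul_sq_mul_max_left hC.le 0 1 3
        · exact hr.le_two_mul_sq_mul_max_right hC.le 2 3 0
        · exact hr.le_two_mul_sq_mul_max_right hC.le 2 3 1
    _ = 4 * C ^ 4 * max (r 0 2 * r 1 3) (r 0 3 * r 1 2) := by
        rw [mul_max_of_nonneg _ _ (by positivity)]
        ring_nf
end

section
/- Let $(X,d)$ be a geodesic metric space in which the Gromov product inequality $(x|y)_w \ge \min((x|z)_w, (z|y)_w) - C$ holds for all points $w,x,y,z$ in some subset $S$ containing a geodesic triangle $\triangle xyz$ (with all vertices and geodesic sides contained in $S$). Then every point $u$ on the side $[x,y]$ lies within distance $4C$ of $[x,z] \cup [y,z]$. -/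
open Metric Set

/-- `γ` is a (unit speed) geodesic from `x` to `y`, parametrized on `[0, dist x y]`. -/
def IsGeodesic {X : Type*} [MetricSpace X] (x y : X) (γ : ℝ → X) : Prop :=
  γ 0 = x ∧ γ (dist x y) = y ∧
    ∀ s ∈ Set.Icc (0 : ℝ) (dist x y), ∀ t ∈ Set.Icc (0 : ℝ) (dist x y),
      dist (γ s) (γ t) = |s - t|

/-- The image of a geodesic segment from `x` to `y`. -/
def geodImg {X : Type*} [MetricSpace X] (x y : X) (γ : ℝ → X) : Set X :=
  γ '' Set.Icc 0 (dist x y)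

/-- The Gromov product `(x|y)_w`. -/
noncomputable def gromovProd {X : Type*} [MetricSpace X] (w x y : X) : ℝ :=
  (dist x w + dist y w - dist x y) / 2


/-!
Write `d = dist x y`. Since `(y|z)_x + (x|z)_y = d`, a point `u` of `[x,y]` satisfies
`d(x,u) ≤ (y|z)_x` or `d(y,u) ≤ (x|z)_y`; by symmetry assume the first and let `v ∈ [x,z]` with
`d(x,v) = d(x,u) = t`. On the geodesics, `(u|y)_x = t` and `(z|v)_x = t`, so two applications of
the Gromov product inequality give `(u|z)_x ≥ t - C` and then `(u|v)_x ≥ t - 2C`, i.e.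
`d(u,v) ≤ 4C`.
-/

section

variable {X : Type*} [MetricSpace X]

def GromovProdIneqOn (S : Set X) (C : ℝ) : Prop :=
  ∀ w ∈ S, ∀ x ∈ S, ∀ y ∈ S, ∀ z ∈ S,
    gromovProd w x y ≥ min (gromovProd w x z) (gromovProd w z y) - C

lemma gromovProd_comm (w x y : X) : gromovProd w x y = gromovProd w y x := by
  unfold gromovProd; rw [dist_comm x y]; ring

lemma gromovProd_le_dist (w x y : X) : gromovProd w x y ≤ dist w y := by
  unfold gromovProd; linarith [dist_triangle x y w, dist_comm y w]

lemma gromovProd_add_gromovProd (x y z : X) :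
    gromovProd x y z + gromovProd y x z = dist x y := by
  unfold gromovProd; rw [dist_comm y x, dist_comm z x, dist_comm z y]; ring

namespace GromovProdIneqOn

variable {S : Set X} {C : ℝ} {w x y z u v : X}

lemma min_sub_le (h : GromovProdIneqOn S C) (hw : w ∈ S) (hx : x ∈ S) (hy : y ∈ S) (hz : z ∈ S)
    {a b : ℝ} (ha : a ≤ gromovProd w x z) (hb : b ≤ gromovProd w z y) :
    min a b - C ≤ gromovProd w x y :=
  (sub_le_sub_right (min_le_min ha hb) C).trans (h w hw x hx y hy z hz)

lemma dist_le_four_mul (h : GromovProdIneqOn S C) (hC : 0 ≤ C) (hx : x ∈ S) (hy : y ∈ S)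
    (hz : z ∈ S) (hu : u ∈ S) (hv : v ∈ S) {t : ℝ} (hux : dist u x = t) (hvx : dist v x = t)
    (huy : t ≤ gromovProd x u y) (hyz : t ≤ gromovProd x y z) (hzv : t ≤ gromovProd x z v) :
    dist u v ≤ 4 * C := by
  have huz : t - C ≤ gromovProd x u z := by simpa using h.min_sub_le hx hu hz hy huy hyz
  have huv : t - 2 * C ≤ gromovProd x u v := by
    have := h.min_sub_le hx hu hv hz huz hzv
    rw [min_eq_left (by linarith)] at this
    linarith
  unfold gromovProd at huv
  rw [hux, hvx] at huv
  linarith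

end GromovProdIneqOn

namespace IsGeodesic

variable {x y u : X} {γ : ℝ → X}

lemma dist_left (h : IsGeodesic x y γ) {t : ℝ} (ht : t ∈ Icc 0 (dist x y)) :
    dist (γ t) x = t := by
  have := h.2.2 t ht 0 ⟨le_rfl, dist_nonneg⟩
  rwa [h.1, sub_zero, abs_of_nonneg ht.1] at this

lemma dist_right (h : IsGeodesic x y γ) {t : ℝ} (ht : t ∈ Icc 0 (dist x y)) :
    dist (γ t) y = dist x y - t := by
  have := h.2.2 t ht (dist x y) ⟨dist_nonneg, le_rfl⟩
  rwa [h.2.1, abs_sub_comm, abs_of_nonneg (sub_nonneg.2 ht.2)] at this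

lemma exists_mem_geodImg_dist_eq (h : IsGeodesic x y γ) {t : ℝ} (ht : t ∈ Icc 0 (dist x y)) :
    ∃ v ∈ geodImg x y γ, dist v x = t :=
  ⟨γ t, mem_image_of_mem γ ht, h.dist_left ht⟩

lemma dist_add_dist_of_mem (h : IsGeodesic x y γ) (hu : u ∈ geodImg x y γ) :
    dist u x + dist u y = dist x y := by
  obtain ⟨t, ht, rfl⟩ := hu
  rw [h.dist_left ht, h.dist_right ht]
  ring

lemma gromovProd_eq_dist_of_mem (h : IsGeodesic x y γ) (hu : u ∈ geodImg x y γ) :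
    gromovProd x u y = dist u x := by
  unfold gromovProd
  linarith [h.dist_add_dist_of_mem hu, dist_comm x y]

lemma reverse (h : IsGeodesic x y γ) : IsGeodesic y x (fun s ↦ γ (dist x y - s)) := by
  refine ⟨by simpa using h.2.1, by simpa [dist_comm y x] using h.1, ?_⟩
  intro s hs t ht
  rw [dist_comm y x] at hs ht
  rw [h.2.2 _ ⟨by linarith [hs.2], by linarith [hs.1]⟩ _ ⟨by linarith [ht.2], by linarith [ht.1]⟩,
    abs_sub_comm]
  ring_nf

end IsGeodesic

lemma geodImg_reverse (x y : X) (γ : ℝ → X) :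
    geodImg y x (fun s ↦ γ (dist x y - s)) = geodImg x y γ := by
  rw [geodImg, dist_comm y x, ← image_image γ (dist x y - ·), image_const_sub_Icc, sub_self,
    sub_zero, geodImg]

lemma exists_dist_le_four_mul_of_dist_le_gromovProd {S : Set X} {C : ℝ}
    (hGP : GromovProdIneqOn S C) (hC : 0 ≤ C) {x y z u : X} (hx : x ∈ S) (hy : y ∈ S)
    (hz : z ∈ S) {γxy γxz : ℝ → X} (hγxy : IsGeodesic x y γxy) (hγxz : IsGeodesic x z γxz)
    (hSxy : geodImg x y γxy ⊆ S) (hSxz : geodImg x z γxz ⊆ S) (hu : u ∈ geodImg x y γxy)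
    (hux : dist u x ≤ gromovProd x y z) :
    ∃ v ∈ geodImg x z γxz, dist u v ≤ 4 * C := by
  obtain ⟨v, hv, hvx⟩ := hγxz.exists_mem_geodImg_dist_eq
    ⟨dist_nonneg, hux.trans (gromovProd_le_dist x y z)⟩
  have hzv : gromovProd x z v = dist u x := by
    rw [gromovProd_comm, hγxz.gromovProd_eq_dist_of_mem hv, hvx]
  exact ⟨v, hv, hGP.dist_le_four_mul hC hx hy hz (hSxy hu) (hSxz hv) rfl hvx
    (hγxy.gromovProd_eq_dist_of_mem hu).ge hux hzv.ge⟩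

end

/-- if the Gromov product inequality holds with constant `C` on a set `S`
containing a geodesic triangle (vertices and sides), then each point of the side `[x,y]`
is within distance `4C` of the union of the other two sides. -/
theorem stmt_6 {X : Type*} [MetricSpace X] (S : Set X) (C : ℝ) (hC : 0 ≤ C)
    (hGP : ∀ w ∈ S, ∀ x ∈ S, ∀ y ∈ S, ∀ z ∈ S,
      gromovProd w x y ≥ min (gromovProd w x z) (gromovProd w z y) - C)
    (x y z : X) (hx : x ∈ S) (hy : y ∈ S) (hz : z ∈ S)
    (γxy γxz γyz : ℝ → X)
    (hγxy : IsGeodesic x y γxy) (hγxz : IsGeodesic x z γxz) (hγyz : IsGeodesic y z γyz)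
    (hSxy : geodImg x y γxy ⊆ S) (hSxz : geodImg x z γxz ⊆ S)
    (hSyz : geodImg y z γyz ⊆ S) :
    ∀ u ∈ geodImg x y γxy, infDist u (geodImg x z γxz ∪ geodImg y z γyz) ≤ 4 * C := by
  intro u hu
  rcases le_or_gt (dist u x) (gromovProd x y z) with hux | hux
  · obtain ⟨v, hv, huv⟩ := exists_dist_le_four_mul_of_dist_le_gromovProd hGP hC hx hy hz
      hγxy hγxz hSxy hSxz hu hux
    exact (infDist_le_dist_of_mem (mem_union_left _ hv)).trans huv
  · have hxy := geodImg_reverse x y γxy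
    have huy : dist u y ≤ gromovProd y x z := by
      linarith [hγxy.dist_add_dist_of_mem hu, gromovProd_add_gromovProd x y z]
    obtain ⟨v, hv, huv⟩ := exists_dist_le_four_mul_of_dist_le_gromovProd hGP hC hy hx hz
      hγxy.reverse hγyz (by rwa [hxy]) hSyz (by rwa [hxy]) huy
    exact (infDist_le_dist_of_mem (mem_union_right _ hv)).trans huv
end

section
/- Let $\Omega \subset \mathbb{C}^n$ be a convex open set. For all $x, y \in \Omega$, $K_\Omega(x,y) \ge \frac{1}{2} \left| \log \frac{\delta_\Omega(x)}{\delta_\Omega(y)} \right|$, where $K_\Omega$ is the Kobayashi distance and $\delta_\Omega(x) = \mathrm{dist}(x, \partial\Omega)$. -/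
/-!
If `Ω` lies in the half-space `{ℓ < c}`, composing a competing disc with the complex-linear
functional whose real part is `ℓ` and applying the Schwarz lemma for the half-plane gives
`|ℓ v| ≤ 2 (c - ℓ z) k_Ω(z; v)`, so along any curve `log (c - ℓ)` varies by at most twice the
Kobayashi length. For convex `Ω` every such half-space gives `‖ℓ‖ δ_Ω ≤ c - ℓ`, and the supporting
half-space at a nearest boundary point of `w` gives `c - ℓ w ≤ ‖ℓ‖ δ_Ω(w)`; hence
`log δ_Ω(z) - log δ_Ω(w) ≤ log (c - ℓ z) - log (c - ℓ w)`. The Kobayashi metric is integrable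
along curves because it is upper semicontinuous.
-/

open Metric Set MeasureTheory intervalIntegral

/-- The infinitesimal Kobayashi pseudometric of `Ω ⊆ ℂⁿ`. -/
noncomputable def kobMetric {n : ℕ} (Ω : Set (EuclideanSpace ℂ (Fin n)))
    (x v : EuclideanSpace ℂ (Fin n)) : ℝ :=
  sInf {r : ℝ | ∃ f : ℂ → EuclideanSpace ℂ (Fin n),
    DifferentiableOn ℂ f (ball (0 : ℂ) 1) ∧ MapsTo f (ball (0 : ℂ) 1) Ω ∧ f 0 = x ∧
    ∃ ξ : ℂ, ξ • derivWithin f (ball (0 : ℂ) 1) 0 = v ∧ r = ‖ξ‖}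

/-- The Kobayashi length of a curve `σ : [a,b] → Ω`. -/
noncomputable def kobLength {n : ℕ} (Ω : Set (EuclideanSpace ℂ (Fin n)))
    (σ : ℝ → EuclideanSpace ℂ (Fin n)) (a b : ℝ) : ℝ :=
  ∫ t in a..b, kobMetric Ω (σ t) (deriv σ t)

/-- The (integrated) Kobayashi pseudodistance on `Ω`, via lengths of curves joining the
two points inside `Ω`. -/
noncomputable def kobDist {n : ℕ} (Ω : Set (EuclideanSpace ℂ (Fin n)))
    (x y : EuclideanSpace ℂ (Fin n)) : ℝ :=
  sInf {L : ℝ | ∃ σ : ℝ → EuclideanSpace ℂ (Fin n), ∃ a b : ℝ, a ≤ b ∧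
    σ a = x ∧ σ b = y ∧ ContDiffOn ℝ 1 σ (Icc a b) ∧ MapsTo σ (Icc a b) Ω ∧
    L = kobLength Ω σ a b}

/-- Distance from `x` to the boundary of `Ω` within the complex line `x + ℂ v`. -/
noncomputable def deltaDir {n : ℕ} (Ω : Set (EuclideanSpace ℂ (Fin n)))
    (x v : EuclideanSpace ℂ (Fin n)) : ℝ :=
  infDist x (frontier Ω ∩ {y | ∃ c : ℂ, y = x + c • v})

open Filter Topology

section ConvexGeometry

variable {E : Type*} [NormedAddCommGroup E] [NormedSpace ℝ E] {Ω : Set E} {z w : E}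

theorem infDist_frontier_eq_infDist_compl [FiniteDimensional ℝ E] (hopen : IsOpen Ω)
    (hz : z ∈ Ω) : infDist z (frontier Ω) = infDist z Ωᶜ := by
  rcases eq_or_ne Ω univ with rfl | hne
  · simp
  obtain ⟨p, hp, hdist⟩ := exists_mem_frontier_infDist_compl_eq_dist hz hne
  refine le_antisymm (hdist ▸ infDist_le_dist_of_mem hp) ?_
  exact infDist_le_infDist_of_subset (hopen.frontier_eq ▸ sdiff_subset_compl _ _) ⟨p, hp⟩

theorem infDist_compl_mul_apply_le {ℓ : E →L[ℝ] ℝ} {c : ℝ} (hsep : ∀ q ∈ Ω, ℓ q < c)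
    (hz : z ∈ Ω) (u : E) : infDist z Ωᶜ * ℓ u ≤ (c - ℓ z) * ‖u‖ := by
  rcases le_or_gt (ℓ u) 0 with hu | hu
  · exact (mul_nonpos_of_nonneg_of_nonpos infDist_nonneg hu).trans
      (mul_nonneg (sub_pos.2 (hsep z hz)).le (norm_nonneg u))
  -- the point of the ray `z + ℝ₊ u` on the hyperplane `ℓ = c` lies outside `Ω`
  set t := (c - ℓ z) / ℓ u
  have hq : z + t • u ∈ Ωᶜ := fun hq => by
    have := hsep _ hq
    simp only [map_add, map_smul, smul_eq_mul, t, div_mul_cancel₀ _ hu.ne'] at this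
    linarith
  have ht : 0 ≤ t := div_nonneg (sub_pos.2 (hsep z hz)).le hu.le
  calc infDist z Ωᶜ * ℓ u ≤ dist z (z + t • u) * ℓ u :=
        mul_le_mul_of_nonneg_right (infDist_le_dist_of_mem hq) hu.le
    _ = (c - ℓ z) * ‖u‖ := by
        rw [dist_self_add_right, norm_smul, Real.norm_of_nonneg ht]
        simp only [t]
        field_simp

theorem infDist_compl_mul_opNorm_le {ℓ : E →L[ℝ] ℝ} {c : ℝ} (hsep : ∀ q ∈ Ω, ℓ q < c)
    (hz : z ∈ Ω) : infDist z Ωᶜ * ‖ℓ‖ ≤ c - ℓ z := by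
  rcases eq_or_lt_of_le (infDist_nonneg : 0 ≤ infDist z Ωᶜ) with hδ | hδ
  · rw [← hδ, zero_mul]
    exact (sub_pos.2 (hsep z hz)).le
  rw [mul_comm, ← le_div_iff₀ hδ]
  refine ℓ.opNorm_le_bound (div_nonneg (sub_pos.2 (hsep z hz)).le hδ.le) fun u => ?_
  rw [div_mul_eq_mul_div, le_div_iff₀ hδ, mul_comm, Real.norm_eq_abs, abs_eq_max_neg,
    mul_max_of_nonneg _ _ hδ.le, max_le_iff]
  refine ⟨infDist_compl_mul_apply_le hsep hz u, ?_⟩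
  simpa using infDist_compl_mul_apply_le hsep hz (-u)

theorem exists_halfspace_sub_le_opNorm_mul_infDist_compl [ProperSpace E]
    (hconv : Convex ℝ Ω) (hopen : IsOpen Ω) (hne : Ωᶜ.Nonempty) (w : E) :
    ∃ (ℓ : E →L[ℝ] ℝ) (c : ℝ), (∀ q ∈ Ω, ℓ q < c) ∧ c - ℓ w ≤ ‖ℓ‖ * infDist w Ωᶜ := by
  obtain ⟨p, hp, hdist⟩ := hopen.isClosed_compl.exists_infDist_eq_dist hne w
  obtain ⟨ℓ, hℓ⟩ := geometric_hahn_banach_open_point hconv hopen hp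
  refine ⟨ℓ, ℓ p, hℓ, ?_⟩
  rw [hdist, dist_comm, dist_eq_norm, ← map_sub]
  exact (le_abs_self _).trans (ℓ.le_opNorm _)

theorem log_infDist_compl_sub_le [ProperSpace E] (hconv : Convex ℝ Ω) (hopen : IsOpen Ω)
    (hne : Ωᶜ.Nonempty) (hz : z ∈ Ω) (hw : w ∈ Ω) :
    ∃ (ℓ : E →L[ℝ] ℝ) (c : ℝ), (∀ q ∈ Ω, ℓ q < c) ∧
      Real.log (infDist z Ωᶜ) - Real.log (infDist w Ωᶜ) ≤
        Real.log (c - ℓ z) - Real.log (c - ℓ w) := by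
  obtain ⟨ℓ, c, hsep, hw'⟩ := exists_halfspace_sub_le_opNorm_mul_infDist_compl hconv hopen hne w
  refine ⟨ℓ, c, hsep, ?_⟩
  have hδ : ∀ q ∈ Ω, 0 < infDist q Ωᶜ := fun q hq =>
    (hopen.isClosed_compl.notMem_iff_infDist_pos hne).1 (not_not.2 hq)
  have hcz := infDist_compl_mul_opNorm_le hsep hz
  have key : infDist z Ωᶜ * (c - ℓ w) ≤ (c - ℓ z) * infDist w Ωᶜ :=
    calc infDist z Ωᶜ * (c - ℓ w) ≤ infDist z Ωᶜ * (‖ℓ‖ * infDist w Ωᶜ) :=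
          mul_le_mul_of_nonneg_left hw' infDist_nonneg
      _ = infDist z Ωᶜ * ‖ℓ‖ * infDist w Ωᶜ := by ring
      _ ≤ (c - ℓ z) * infDist w Ωᶜ := mul_le_mul_of_nonneg_right hcz infDist_nonneg
  have := Real.log_le_log (mul_pos (hδ z hz) (sub_pos.2 (hsep w hw))) key
  rw [Real.log_mul (hδ z hz).ne' (sub_pos.2 (hsep w hw)).ne',
    Real.log_mul (sub_pos.2 (hsep z hz)).ne' (hδ w hw).ne'] at this
  linarith

end ConvexGeometry

theorem Complex.norm_sub_lt_norm_add_conj {a b : ℂ} (ha : a.re < 0) (hb : b.re < 0) :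
    ‖a - b‖ < ‖a + (starRingEnd ℂ) b‖ := by
  rw [← sq_lt_sq₀ (norm_nonneg _) (norm_nonneg _), Complex.sq_norm, Complex.sq_norm,
    Complex.normSq_apply, Complex.normSq_apply]
  simp only [Complex.sub_re, Complex.sub_im, Complex.add_re, Complex.add_im, Complex.conj_re,
    Complex.conj_im]
  nlinarith

theorem Complex.norm_deriv_le_of_re_neg {g : ℂ → ℂ} (hg : DifferentiableOn ℂ g (ball 0 1))
    (hre : ∀ w ∈ ball (0 : ℂ) 1, (g w).re < 0) : ‖deriv g 0‖ ≤ -2 * (g 0).re := by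
  set A := g 0
  have hA : A.re < 0 := hre 0 (mem_ball_self one_pos)
  have hden : ∀ w ∈ ball (0 : ℂ) 1, g w + (starRingEnd ℂ) A ≠ 0 := fun w hw h => by
    have := congrArg Complex.re h
    simp only [Complex.add_re, Complex.conj_re, Complex.zero_re] at this
    linarith [hre w hw]
  -- the Cayley transform `h` maps the disc to itself and fixes `0`
  set h : ℂ → ℂ := fun w => (g w - A) / (g w + (starRingEnd ℂ) A)
  have hh : DifferentiableOn ℂ h (ball 0 1) := (hg.sub_const A).div (hg.add_const _) hden
  have h0 : h 0 = 0 := by simp [h, A]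
  have hmaps : MapsTo h (ball 0 1) (closedBall (h 0) 1) := fun w hw => by
    rw [h0, mem_closedBall, dist_zero_right, norm_div]
    exact div_le_one_of_le₀ (Complex.norm_sub_lt_norm_add_conj (hre w hw) hA).le (norm_nonneg _)
  have hschwarz := Complex.norm_deriv_le_div_of_mapsTo_ball hh hmaps one_pos
  have hg' : HasDerivAt g (deriv g 0) 0 :=
    (hg.differentiableAt (isOpen_ball.mem_nhds (mem_ball_self one_pos))).hasDerivAt
  have hh' : deriv h 0 = deriv g 0 / (2 * A.re) := by
    have : HasDerivAt h _ 0 :=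
      (hg'.sub_const A).div (hg'.add_const _) (hden 0 (mem_ball_self one_pos))
    rw [this.deriv, Complex.add_conj]
    simp only [sub_self, zero_mul, sub_zero, Complex.ofReal_mul, Complex.ofReal_ofNat, A]
    field_simp
  rw [hh', norm_div, div_one, div_le_one (by simpa using hA.ne)] at hschwarz
  simpa [abs_of_neg hA] using hschwarz

section Kobayashi

variable {n : ℕ} {Ω : Set (EuclideanSpace ℂ (Fin n))} {z v : EuclideanSpace ℂ (Fin n)}

theorem kobMetric_nonneg (Ω : Set (EuclideanSpace ℂ (Fin n))) (z v : EuclideanSpace ℂ (Fin n)) :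
    0 ≤ kobMetric Ω z v :=
  Real.sInf_nonneg (by rintro _ ⟨f, -, -, -, ξ, -, rfl⟩; positivity)

theorem kobMetric_le_norm {f : ℂ → EuclideanSpace ℂ (Fin n)}
    (hf : DifferentiableOn ℂ f (ball 0 1)) (hfΩ : MapsTo f (ball 0 1) Ω) (ξ : ℂ) :
    kobMetric Ω (f 0) (ξ • deriv f 0) ≤ ‖ξ‖ :=
  csInf_le ⟨0, by rintro _ ⟨f, -, -, -, ξ, -, rfl⟩; positivity⟩
    ⟨f, hf, hfΩ, rfl, ξ, by rw [derivWithin_of_isOpen isOpen_ball (mem_ball_self one_pos)], rfl⟩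

theorem exists_disc_tangent (hopen : IsOpen Ω) (hz : z ∈ Ω) (v : EuclideanSpace ℂ (Fin n)) :
    ∃ (f : ℂ → EuclideanSpace ℂ (Fin n)) (ξ : ℂ), DifferentiableOn ℂ f (ball 0 1) ∧
      MapsTo f (ball 0 1) Ω ∧ f 0 = z ∧ ξ • deriv f 0 = v := by
  obtain ⟨r, hr, hball⟩ := Metric.isOpen_iff.1 hopen z hz
  set s : ℝ := r / (‖v‖ + 1)
  have hs : 0 < s := by positivity
  have hd : HasDerivAt (fun w : ℂ => z + w • (s : ℂ) • v) ((s : ℂ) • v) 0 := by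
    simpa using ((hasDerivAt_id (0 : ℂ)).smul_const ((s : ℂ) • v)).const_add z
  refine ⟨fun w => z + w • (s : ℂ) • v, (s : ℂ)⁻¹, ?_, fun w hw => hball ?_, by simp, ?_⟩
  · exact (differentiable_const z |>.add (differentiable_id.smul_const _)).differentiableOn
  · rw [mem_ball, dist_self_add_left, norm_smul, norm_smul, Complex.norm_real,
      Real.norm_of_nonneg hs.le]
    rw [mem_ball, dist_zero_right] at hw
    calc ‖w‖ * (s * ‖v‖) ≤ 1 * (s * ‖v‖) := by gcongr
      _ < r := by
        simp only [s, one_mul, div_mul_eq_mul_div]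
        rw [div_lt_iff₀ (by positivity)]
        nlinarith [norm_nonneg v]
  · rw [hd.deriv, inv_smul_smul₀ (by simpa using hs.ne')]

theorem exists_disc_of_kobMetric_lt (hopen : IsOpen Ω) (hz : z ∈ Ω) {c : ℝ}
    (hc : kobMetric Ω z v < c) :
    ∃ (f : ℂ → EuclideanSpace ℂ (Fin n)) (ξ : ℂ), DifferentiableOn ℂ f (ball 0 1) ∧
      MapsTo f (ball 0 1) Ω ∧ f 0 = z ∧ ξ • deriv f 0 = v ∧ ξ ≠ 0 ∧ ‖ξ‖ < c := by
  have hderiv {f : ℂ → EuclideanSpace ℂ (Fin n)} : derivWithin f (ball 0 1) 0 = deriv f 0 :=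
    derivWithin_of_isOpen isOpen_ball (mem_ball_self one_pos)
  obtain ⟨f₀, ξ₀, hf₀, hf₀Ω, hf₀0, hv₀⟩ := exists_disc_tangent hopen hz v
  obtain ⟨_, ⟨f, hf, hfΩ, hf0, ξ, hv, rfl⟩, hξc⟩ :=
    exists_lt_of_csInf_lt (by exact ⟨_, f₀, hf₀, hf₀Ω, hf₀0, ξ₀, hderiv ▸ hv₀, rfl⟩) hc
  rw [hderiv] at hv
  rcases eq_or_ne ξ 0 with rfl | hξ
  · -- then `v = 0`, which the constant disc realises with any coefficient
    have hc : 0 < c := by simpa using hξc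
    refine ⟨fun _ => z, ((c / 2 : ℝ) : ℂ), differentiableOn_const z, fun _ _ => hz, rfl,
      by simp [← hv], by simpa using hc.ne', ?_⟩
    rw [Complex.norm_real, Real.norm_of_nonneg (by positivity)]
    linarith
  · exact ⟨f, ξ, hf, hfΩ, hf0, hv, hξ, hξc⟩

theorem abs_apply_le_two_mul_kobMetric (hopen : IsOpen Ω)
    {ℓ : EuclideanSpace ℂ (Fin n) →L[ℝ] ℝ} {c : ℝ} (hsep : ∀ q ∈ Ω, ℓ q < c) (hz : z ∈ Ω)
    (v : EuclideanSpace ℂ (Fin n)) : |ℓ v| ≤ 2 * (c - ℓ z) * kobMetric Ω z v := by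
  have hcz : 0 < 2 * (c - ℓ z) := by linarith [hsep z hz]
  rw [mul_comm, ← div_le_iff₀ hcz]
  refine le_of_forall_gt_imp_ge_of_dense fun r hr => ?_
  obtain ⟨f, ξ, hf, hfΩ, rfl, rfl, -, hξr⟩ := exists_disc_of_kobMetric_lt hopen hz hr
  -- `Λ ∘ f - c` maps the disc into the left half-plane, where `Λ` is the complex-linear
  -- functional with real part `ℓ`
  set Λ : EuclideanSpace ℂ (Fin n) →L[ℂ] ℂ := StrongDual.extendRCLike ℓ
  have hΛ (u : EuclideanSpace ℂ (Fin n)) : (Λ u).re = ℓ u :=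
    StrongDual.re_extendRCLike_apply (𝕜 := ℂ) ℓ u
  have hf' : HasDerivAt f (deriv f 0) 0 :=
    (hf.differentiableAt (isOpen_ball.mem_nhds (mem_ball_self one_pos))).hasDerivAt
  have hschwarz := Complex.norm_deriv_le_of_re_neg (g := fun w => Λ (f w) - c)
    ((Λ.differentiable.comp_differentiableOn hf).sub_const _)
    (fun w hw => by simpa [hΛ] using hsep _ (hfΩ hw))
  have hg' : HasDerivAt (fun w => Λ (f w) - c) (Λ (deriv f 0)) 0 :=
    (Λ.hasFDerivAt.comp_hasDerivAt 0 hf').sub_const (c : ℂ)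
  rw [hg'.deriv] at hschwarz
  simp only [Complex.sub_re, hΛ, Complex.ofReal_re] at hschwarz
  rw [div_le_iff₀ hcz]
  calc |ℓ (ξ • deriv f 0)| = |(Λ (ξ • deriv f 0)).re| := by rw [hΛ]
    _ ≤ ‖ξ‖ * ‖Λ (deriv f 0)‖ := by
        rw [map_smul, ← norm_smul]
        exact Complex.abs_re_le_norm _
    _ ≤ r * (2 * (c - ℓ (f 0))) :=
        mul_le_mul hξr.le (by linarith) (norm_nonneg _) ((norm_nonneg ξ).trans hξr.le)

theorem kobMetric_le_of_thickening_subset {f : ℂ → EuclideanSpace ℂ (Fin n)} {ρ η : ℝ}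
    (hf : DifferentiableOn ℂ f (ball 0 1)) (hρ : 0 < ρ) (hρ1 : ρ < 1)
    (hη : thickening η (f '' closedBall 0 ρ) ⊆ Ω) {p u : EuclideanSpace ℂ (Fin n)}
    (hpu : ‖p‖ + ‖u‖ < η) (ξ : ℂ) :
    kobMetric Ω (f 0 + p) (ξ • ((ρ : ℂ) • deriv f 0 + u)) ≤ ‖ξ‖ := by
  have hρball : ∀ w ∈ ball (0 : ℂ) 1, (ρ : ℂ) * w ∈ closedBall (0 : ℂ) ρ := fun w hw => by
    rw [mem_closedBall_zero_iff, norm_mul, Complex.norm_real, Real.norm_of_nonneg hρ.le]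
    rw [mem_ball_zero_iff] at hw
    nlinarith
  have hsub : closedBall (0 : ℂ) ρ ⊆ ball 0 1 := closedBall_subset_ball hρ1
  set g : ℂ → EuclideanSpace ℂ (Fin n) := fun w => f ((ρ : ℂ) * w) + (p + w • u)
  have hg : DifferentiableOn ℂ g (ball 0 1) :=
    (hf.comp (differentiable_id.const_mul _).differentiableOn
      fun w hw => hsub (hρball w hw)).add
    (differentiable_const p |>.add (differentiable_id.smul_const u)).differentiableOn
  have hgΩ : MapsTo g (ball 0 1) Ω := fun w hw => hη <| mem_thickening_iff.2
    ⟨_, mem_image_of_mem f (hρball w hw), by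
      rw [dist_eq_norm, add_sub_cancel_left]
      calc ‖p + w • u‖ ≤ ‖p‖ + ‖w‖ * ‖u‖ := (norm_add_le _ _).trans_eq (by rw [norm_smul])
        _ ≤ ‖p‖ + 1 * ‖u‖ := by
            gcongr
            exact (mem_ball_zero_iff.1 hw).le
        _ < η := by rwa [one_mul]⟩
  have hf' : HasDerivAt f (deriv f 0) 0 :=
    (hf.differentiableAt (isOpen_ball.mem_nhds (mem_ball_self one_pos))).hasDerivAt
  have hg' : HasDerivAt g ((ρ : ℂ) • deriv f 0 + u) 0 := by
    have hρw : HasDerivAt (fun w : ℂ => (ρ : ℂ) * w) (ρ : ℂ) 0 := by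
      simpa using (hasDerivAt_id (0 : ℂ)).const_mul (ρ : ℂ)
    have hfρ : HasDerivAt (fun w => f ((ρ : ℂ) * w)) ((ρ : ℂ) • deriv f 0) 0 :=
      HasDerivAt.scomp (𝕜 := ℂ) 0 (by simpa using hf') hρw
    refine hfρ.add ?_
    simpa using ((hasDerivAt_id (0 : ℂ)).smul_const u).const_add p
  simpa [g, hg'.deriv] using kobMetric_le_norm hg hgΩ ξ

theorem upperSemicontinuousAt_kobMetric (hopen : IsOpen Ω) (hz : z ∈ Ω)
    (v : EuclideanSpace ℂ (Fin n)) :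
    UpperSemicontinuousAt (fun q : EuclideanSpace ℂ (Fin n) × EuclideanSpace ℂ (Fin n) =>
      kobMetric Ω q.1 q.2) (z, v) := by
  intro c hc
  obtain ⟨f, ξ, hf, hfΩ, rfl, rfl, hξ, hξc⟩ := exists_disc_of_kobMetric_lt hopen hz hc
  have hc0 : 0 < c := (norm_nonneg ξ).trans_lt hξc
  -- shrinking the disc by a factor `ρ` costs only `‖ξ‖ / ρ < c`, and leaves room `η` around
  -- the compact image of the closed disc of radius `ρ` for perturbations of `f 0` and `v`
  obtain ⟨ρ, hξρ, hρ1⟩ := exists_between ((div_lt_one hc0).2 hξc)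
  have hρ : 0 < ρ := (div_nonneg (norm_nonneg ξ) hc0.le).trans_lt hξρ
  have hsub : closedBall (0 : ℂ) ρ ⊆ ball 0 1 := closedBall_subset_ball hρ1
  obtain ⟨η, hη, hthick⟩ := ((isCompact_closedBall (0 : ℂ) ρ).image_of_continuousOn
    (hf.continuousOn.mono hsub)).exists_thickening_subset_open hopen
    (image_subset_iff.2 fun w hw => hfΩ (hsub hw))
  set ξ' : ℂ := ξ / ρ
  have hξ' : ξ' ≠ 0 := div_ne_zero hξ (by simpa using hρ.ne')
  have hnear : ∀ᶠ q in 𝓝 (f 0, ξ • deriv f 0),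
      ‖q.1 - f 0‖ + ‖ξ'⁻¹ • (q.2 - ξ • deriv f 0)‖ < η :=
    (by fun_prop : Continuous fun q : EuclideanSpace ℂ (Fin n) × EuclideanSpace ℂ (Fin n) =>
      ‖q.1 - f 0‖ + ‖ξ'⁻¹ • (q.2 - ξ • deriv f 0)‖).continuousAt.eventually_lt
      continuousAt_const (by simpa using hη)
  filter_upwards [hnear] with ⟨z', v'⟩ hq
  have hle := kobMetric_le_of_thickening_subset hf hρ hρ1 hthick hq ξ'
  have hv' : ξ' • ((ρ : ℂ) • deriv f 0 + ξ'⁻¹ • (v' - ξ • deriv f 0)) = v' := by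
    rw [smul_add, smul_inv_smul₀ hξ', smul_smul, div_mul_cancel₀ _ (by simpa using hρ.ne')]
    abel
  rw [add_sub_cancel, hv'] at hle
  calc kobMetric Ω z' v' ≤ ‖ξ'‖ := hle
    _ = ‖ξ‖ / ρ := by rw [norm_div, Complex.norm_real, Real.norm_of_nonneg hρ.le]
    _ < c := by rwa [div_lt_iff₀ hρ, ← div_lt_iff₀' hc0]

theorem integrableOn_kobMetric (hopen : IsOpen Ω) {σ : ℝ → EuclideanSpace ℂ (Fin n)} {a b : ℝ}
    (hab : a ≤ b) (hσ : ContDiffOn ℝ 1 σ (Icc a b)) (hmap : MapsTo σ (Icc a b) Ω) :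
    IntegrableOn (fun t => kobMetric Ω (σ t) (deriv σ t)) (Icc a b) := by
  rcases hab.eq_or_lt with rfl | hab'
  · simp
  -- extending `σ` and `σ'` constantly beyond `[a, b]` makes the integrand upper semicontinuous
  set γ : ℝ → EuclideanSpace ℂ (Fin n) × EuclideanSpace ℂ (Fin n) := fun t =>
    (σ (projIcc a b hab t), derivWithin σ (Icc a b) (projIcc a b hab t))
  have hp : Continuous fun t => (projIcc a b hab t : ℝ) := continuous_projIcc.subtype_val
  have hpm (t : ℝ) : (projIcc a b hab t : ℝ) ∈ Icc a b := (projIcc a b hab t).2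
  have hγ : Continuous γ := (hσ.continuousOn.comp_continuous hp hpm).prodMk
    ((hσ.continuousOn_derivWithin (uniqueDiffOn_Icc hab') le_rfl).comp_continuous hp hpm)
  set G : ℝ → ℝ := fun t => kobMetric Ω (γ t).1 (γ t).2
  have hG : UpperSemicontinuous G := fun t =>
    (upperSemicontinuousAt_kobMetric hopen (hmap (hpm t)) (γ t).2).comp (g := γ) hγ.continuousAt
  obtain ⟨M, hM⟩ := (hG.upperSemicontinuousOn (Icc a b)).bddAbove_of_isCompact isCompact_Icc
  have hGint : IntegrableOn G (Icc a b) :=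
    Measure.integrableOn_of_bounded measure_Icc_lt_top.ne hG.measurable.aestronglyMeasurable
      ((ae_restrict_iff' measurableSet_Icc).2 (Eventually.of_forall fun t ht => by
        rw [Real.norm_of_nonneg (kobMetric_nonneg _ _ _)]
        exact hM (mem_image_of_mem G ht)))
  rw [integrableOn_Icc_iff_integrableOn_Ioo] at hGint ⊢
  refine hGint.congr_fun (fun t ht => ?_) measurableSet_Ioo
  simp only [G, γ, projIcc_of_mem hab (Ioo_subset_Icc_self ht),
    derivWithin_of_mem_nhds (Icc_mem_nhds ht.1 ht.2)]

theorem abs_log_sub_le_two_mul_kobLength (hopen : IsOpen Ω)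
    {ℓ : EuclideanSpace ℂ (Fin n) →L[ℝ] ℝ} {c : ℝ} (hsep : ∀ q ∈ Ω, ℓ q < c)
    {σ : ℝ → EuclideanSpace ℂ (Fin n)} {a b : ℝ} (hab : a ≤ b)
    (hσ : ContDiffOn ℝ 1 σ (Icc a b)) (hmap : MapsTo σ (Icc a b) Ω) :
    |Real.log (c - ℓ (σ b)) - Real.log (c - ℓ (σ a))| ≤ 2 * kobLength Ω σ a b := by
  have hpos (t : ℝ) (ht : t ∈ Icc a b) : 0 < c - ℓ (σ t) := sub_pos.2 (hsep _ (hmap ht))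
  set φ : ℝ → ℝ := fun t => Real.log (c - ℓ (σ t))
  have hφ : ContinuousOn φ (Icc a b) :=
    ((continuous_const.sub ℓ.continuous).comp_continuousOn hσ.continuousOn).log
      fun t ht => (hpos t ht).ne'
  have hφ' (t : ℝ) (ht : t ∈ Ioo a b) :
      HasDerivAt φ (-ℓ (deriv σ t) / (c - ℓ (σ t))) t := by
    have hσ' : HasDerivAt σ (deriv σ t) t :=
      ((hσ.differentiableOn one_ne_zero).differentiableAt (Icc_mem_nhds ht.1 ht.2)).hasDerivAt
    simpa using ((ℓ.hasFDerivAt.comp_hasDerivAt t hσ').const_sub c).log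
      (hpos t (Ioo_subset_Icc_self ht)).ne'
  have hbound (t : ℝ) (ht : t ∈ Ioo a b) :
      |-ℓ (deriv σ t) / (c - ℓ (σ t))| ≤ 2 * kobMetric Ω (σ t) (deriv σ t) := by
    have hσt := hpos t (Ioo_subset_Icc_self ht)
    rw [abs_div, abs_neg, abs_of_pos hσt, div_le_iff₀ hσt]
    linarith [abs_apply_le_two_mul_kobMetric hopen hsep (hmap (Ioo_subset_Icc_self ht))
      (deriv σ t)]
  have hint := (integrableOn_kobMetric hopen hab hσ hmap).const_mul 2
  rw [kobLength, ← intervalIntegral.integral_const_mul, abs_sub_le_iff]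
  constructor
  · exact sub_le_integral_of_hasDeriv_right_of_le hab hφ
      (fun t ht => (hφ' t ht).hasDerivWithinAt) hint
      (fun t ht => (le_abs_self _).trans (hbound t ht))
  · have := sub_le_integral_of_hasDeriv_right_of_le hab hφ.neg
      (fun t ht => (hφ' t ht).neg.hasDerivWithinAt) hint
      (fun t ht => (neg_le_abs _).trans (hbound t ht))
    simp only [Pi.neg_apply] at this
    linarith

theorem abs_log_infDist_frontier_div_le_two_mul_kobLength (hconv : Convex ℝ Ω)
    (hopen : IsOpen Ω)
    {σ : ℝ → EuclideanSpace ℂ (Fin n)} {a b : ℝ} (hab : a ≤ b)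
    (hσ : ContDiffOn ℝ 1 σ (Icc a b)) (hmap : MapsTo σ (Icc a b) Ω) :
    |Real.log (infDist (σ a) (frontier Ω) / infDist (σ b) (frontier Ω))| ≤
      2 * kobLength Ω σ a b := by
  have ha := hmap (left_mem_Icc.2 hab)
  have hb := hmap (right_mem_Icc.2 hab)
  rw [infDist_frontier_eq_infDist_compl hopen ha, infDist_frontier_eq_infDist_compl hopen hb]
  rcases Ωᶜ.eq_empty_or_nonempty with hempty | hne
  · simpa [hempty, kobLength] using
      intervalIntegral.integral_nonneg hab fun t _ => kobMetric_nonneg Ω (σ t) (deriv σ t)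
  have hδ : ∀ q ∈ Ω, infDist q Ωᶜ ≠ 0 := fun q hq =>
    ((hopen.isClosed_compl.notMem_iff_infDist_pos hne).1 (not_not.2 hq)).ne'
  obtain ⟨ℓ, c, hsep, hlog_ab⟩ := log_infDist_compl_sub_le hconv hopen hne ha hb
  obtain ⟨ℓ', c', hsep', hlog_ba⟩ := log_infDist_compl_sub_le hconv hopen hne hb ha
  have h := abs_log_sub_le_two_mul_kobLength hopen hsep hab hσ hmap
  have h' := abs_log_sub_le_two_mul_kobLength hopen hsep' hab hσ hmap
  rw [Real.log_div (hδ _ ha) (hδ _ hb), abs_sub_le_iff]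
  constructor
  · linarith [neg_abs_le (Real.log (c - ℓ (σ b)) - Real.log (c - ℓ (σ a)))]
  · linarith [le_abs_self (Real.log (c' - ℓ' (σ b)) - Real.log (c' - ℓ' (σ a)))]

end Kobayashi

/-- on a convex domain the Kobayashi distance dominates
`½ |log (δ_Ω(x)/δ_Ω(y))|`. -/
theorem stmt_9 {n : ℕ} (Ω : Set (EuclideanSpace ℂ (Fin n)))
    (hconv : Convex ℝ Ω) (hopen : IsOpen Ω)
    (x y : EuclideanSpace ℂ (Fin n)) (hx : x ∈ Ω) (hy : y ∈ Ω) :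
    (1 / 2) * |Real.log (infDist x (frontier Ω) / infDist y (frontier Ω))| ≤
      kobDist Ω x y := by
  have hsegment : ContDiffOn ℝ 1 (fun t : ℝ => x + t • (y - x)) (Icc 0 1) := by fun_prop
  refine le_csInf ⟨_, fun t => x + t • (y - x), 0, 1, zero_le_one, by simp, by simp, hsegment,
    fun t ht => hconv.add_smul_sub_mem hx hy ht, rfl⟩ ?_
  rintro _ ⟨σ, a, b, hab, rfl, rfl, hσ, hmap, rfl⟩
  linarith [abs_log_infDist_frontier_div_le_two_mul_kobLength hconv hopen hab hσ hmap]
end
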